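/- arXiv:2310.15092 — 7 statements merged into one kernel-verified Lean document; each statement's English description precedes it below -/
import Mathlib

section
/- Let G be a finite group, F a field, A ∈ Mat_{m_A × n_A}(F[G]) and B ∈ Mat_{m_B × n_B}(F[G]). Then the flattened lifted-product parity-check matrices over F satisfy the CSS orthogonality condition H_X · H_Zᵀ = 0. -/
/-!
The `((i, k), (j, l))` block of `H_X * H_Zᵀ` is `L(a)ᵀ R(b) - R(b) L(a)ᵀ` with `a = A i j` and
`b = B k l`. Now `L(a)ᵀ = L(ǎ)` with `ǎ g = a g⁻¹`, and left and right multiplications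
in `F[G]` commute by associativity, so every block vanishes.
-/

open Matrix

/-- The flattened lifted-product parity-check matrix `H_X` over `F`, associated with
`A ∈ Mat_{m_A×n_A}(F[G])` and `B ∈ Mat_{m_B×n_B}(F[G])`:
the block matrix `[♮A ⊗ I_{m_B}, −I_{m_A} ⊗ B♮]`, where `♮A` replaces each entry `a` by
`L(a)ᵀ` and `B♮` replaces each entry `b` by `R(b)`. -/
def liftedHX {F : Type*} [Field F] {G : Type*} [Group G] {mA nA mB nB : ℕ}
    (A : Matrix (Fin mA) (Fin nA) (MonoidAlgebra F G))
    (B : Matrix (Fin mB) (Fin nB) (MonoidAlgebra F G)) :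
    Matrix ((Fin mA × Fin mB) × G) (((Fin nA × Fin mB) ⊕ (Fin mA × Fin nB)) × G) F :=
  Matrix.of fun p q =>
    match p, q with
    | ((i, k), g), (Sum.inl (j, k'), h) => if k = k' then (A i j).coeff (h * g⁻¹) else 0
    | ((i, k), g), (Sum.inr (i', j), h) => if i = i' then -((B k j).coeff (h⁻¹ * g)) else 0

/-- The flattened lifted-product parity-check matrix `H_Z` over `F`, associated with
`A ∈ Mat_{m_A×n_A}(F[G])` and `B ∈ Mat_{m_B×n_B}(F[G])`:
the block matrix `[I_{n_A} ⊗ (B♮)ᵀ, (♮A)ᵀ ⊗ I_{n_B}]`. -/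
def liftedHZ {F : Type*} [Field F] {G : Type*} [Group G] {mA nA mB nB : ℕ}
    (A : Matrix (Fin mA) (Fin nA) (MonoidAlgebra F G))
    (B : Matrix (Fin mB) (Fin nB) (MonoidAlgebra F G)) :
    Matrix ((Fin nA × Fin nB) × G) (((Fin nA × Fin mB) ⊕ (Fin mA × Fin nB)) × G) F :=
  Matrix.of fun p q =>
    match p, q with
    | ((j, l), g), (Sum.inl (j', k), h) => if j = j' then (B k l).coeff (g⁻¹ * h) else 0
    | ((j, l), g), (Sum.inr (i, l'), h) => if l = l' then (A i j).coeff (g * h⁻¹) else 0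

namespace MonoidAlgebra

variable {F G : Type*} [Group G]

/-- `L(a)`: column `g` holds the coefficients of `a * single g 1`. -/
def leftRegularMatrix [Semiring F] (a : MonoidAlgebra F G) : Matrix G G F :=
  Matrix.of fun h g => a.coeff (h * g⁻¹)

/-- `R(b)`: column `g` holds the coefficients of `single g 1 * b`. -/
def rightRegularMatrix [Semiring F] (b : MonoidAlgebra F G) : Matrix G G F :=
  Matrix.of fun h g => b.coeff (g⁻¹ * h)

theorem commute_leftRegularMatrix_transpose_rightRegularMatrix [CommSemiring F] [Fintype G]
    (a b : MonoidAlgebra F G) :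
    Commute (leftRegularMatrix a)ᵀ (rightRegularMatrix b) := by
  ext g g'
  simp only [Matrix.mul_apply, transpose_apply, leftRegularMatrix, rightRegularMatrix,
    Matrix.of_apply]
  -- substitute `h ↦ g * h⁻¹ * g'` on the left
  refine Fintype.sum_equiv ((Equiv.inv G).trans ((Equiv.mulLeft g).trans (Equiv.mulRight g')))
    _ _ fun h => ?_
  simp only [Equiv.trans_apply, Equiv.inv_apply, Equiv.coe_mulLeft, Equiv.coe_mulRight]
  rw [mul_comm]
  congr 2 <;> group

end MonoidAlgebra

open MonoidAlgebra (leftRegularMatrix rightRegularMatrix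
  commute_leftRegularMatrix_transpose_rightRegularMatrix)

theorem liftedHX_mul_liftedHZ_transpose_apply {F : Type*} [Field F]
    {G : Type*} [Group G] [Fintype G] {mA nA mB nB : ℕ}
    (A : Matrix (Fin mA) (Fin nA) (MonoidAlgebra F G))
    (B : Matrix (Fin mB) (Fin nB) (MonoidAlgebra F G))
    (i : Fin mA) (k : Fin mB) (j : Fin nA) (l : Fin nB) (g g' : G) :
    (liftedHX A B * (liftedHZ A B)ᵀ) ((i, k), g) ((j, l), g') =
      ((leftRegularMatrix (A i j))ᵀ * rightRegularMatrix (B k l)) g g' -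
        (rightRegularMatrix (B k l) * (leftRegularMatrix (A i j))ᵀ) g g' := by
  simp only [mul_apply, transpose_apply, liftedHX, liftedHZ, leftRegularMatrix,
    rightRegularMatrix, Matrix.of_apply, Fintype.sum_sum_type, Fintype.sum_prod_type]
  simp [ite_mul, mul_ite, Finset.sum_ite_eq, sub_eq_add_neg]

/-- The flattened lifted-product parity-check matrices satisfy the CSS orthogonality
condition `H_X * H_Zᵀ = 0`. -/
theorem liftedHX_mul_liftedHZ_transpose {F : Type*} [Field F]
    {G : Type*} [Group G] [Fintype G] {mA nA mB nB : ℕ}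
    (A : Matrix (Fin mA) (Fin nA) (MonoidAlgebra F G))
    (B : Matrix (Fin mB) (Fin nB) (MonoidAlgebra F G)) :
    liftedHX A B * (liftedHZ A B)ᵀ = 0 := by
  ext ⟨⟨i, k⟩, g⟩ ⟨⟨j, l⟩, g'⟩
  rw [liftedHX_mul_liftedHZ_transpose_apply,
    (commute_leftRegularMatrix_transpose_rightRegularMatrix (A i j) (B k l)).eq, sub_self]
  rfl
end

section
/- Let R be a commutative ring, A : Matrix (Fin m_A) (Fin n_A) R and B : Matrix (Fin m_B) (Fin n_B) R. Define H_X = [A ⊗ I_{m_B}, −(I_{m_A} ⊗ B)] (the matrix with column blocks A ⊗ I_{m_B} and −(I_{m_A} ⊗ B)) and H_Z = [I_{n_A} ⊗ Bᵀ, Aᵀ ⊗ I_{n_B}]. Then H_X · H_Zᵀ = 0. -/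
open Matrix
open Kronecker

namespace Matrix

variable {α l m n p : Type*} [CommSemiring α]

theorem kronecker_one_mul_one_kronecker [Fintype m] [Fintype n] [DecidableEq m] [DecidableEq n]
    (A : Matrix l m α) (B : Matrix n p α) :
    (A ⊗ₖ (1 : Matrix n n α)) * ((1 : Matrix m m α) ⊗ₖ B) = A ⊗ₖ B := by
  rw [← mul_kronecker_mul, Matrix.mul_one, Matrix.one_mul]

theorem one_kronecker_mul_kronecker_one [Fintype l] [Fintype p] [DecidableEq l] [DecidableEq p]
    (A : Matrix l m α) (B : Matrix n p α) :
    ((1 : Matrix l l α) ⊗ₖ B) * (A ⊗ₖ (1 : Matrix p p α)) = A ⊗ₖ B := by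
  rw [← mul_kronecker_mul, Matrix.mul_one, Matrix.one_mul]

end Matrix

/-- Let `R` be a commutative ring, `A : Matrix (Fin m_A) (Fin n_A) R` and
`B : Matrix (Fin m_B) (Fin n_B) R`. With `H_X = [A ⊗ I_{m_B}, −(I_{m_A} ⊗ B)]` and
`H_Z = [I_{n_A} ⊗ Bᵀ, Aᵀ ⊗ I_{n_B}]` we have `H_X * H_Zᵀ = 0`. -/
theorem fromColumns_kronecker_orthogonality {R : Type*} [CommRing R] {mA nA mB nB : ℕ}
    (A : Matrix (Fin mA) (Fin nA) R) (B : Matrix (Fin mB) (Fin nB) R) :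
    Matrix.fromCols (A ⊗ₖ (1 : Matrix (Fin mB) (Fin mB) R))
        (-((1 : Matrix (Fin mA) (Fin mA) R) ⊗ₖ B)) *
      (Matrix.fromCols ((1 : Matrix (Fin nA) (Fin nA) R) ⊗ₖ Bᵀ)
        (Aᵀ ⊗ₖ (1 : Matrix (Fin nB) (Fin nB) R)))ᵀ = 0 := by
  rw [transpose_fromCols, fromCols_mul_fromRows, Matrix.neg_mul,
    ← kroneckerMap_transpose, ← kroneckerMap_transpose]
  simp only [transpose_one, transpose_transpose]
  rw [kronecker_one_mul_one_kronecker, one_kronecker_mul_kronecker_one, add_neg_cancel]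
end

section
/- Let F be a field and A, B : Matrix (Fin m) (Fin m) F, and set k_A = m − rank(A) and k_B = m − rank(B) (the dimensions of the kernels of the induced linear maps). Let H_X = [A ⊗ I_m, −(I_m ⊗ B)] and H_Z = [I_m ⊗ Bᵀ, Aᵀ ⊗ I_m]. Then rank(H_X) = m² − k_A·k_B and rank(H_Z) = m² − k_A·k_B (equivalently, rank(H_X) + k_A·k_B = m² and rank(H_Z) + k_A·k_B = m²). -/
/-! The column space of `[A ⊗ I, I ⊗ B]` is `im A ⊗ V + V ⊗ im B`, and by right exactness of the
tensor product the quotient of `V ⊗ V` by it is `coker A ⊗ coker B`, of dimension `k_A k_B`.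
Negating a block does not change the column space, and `H_Z` is the same construction for
`Aᵀ, Bᵀ` with the two blocks swapped; transposition preserves rank. -/

open Matrix
open Kronecker

open Module

section TensorQuotient

variable {K V W V' W' : Type*} [Field K]
  [AddCommGroup V] [Module K V] [FiniteDimensional K V]
  [AddCommGroup W] [Module K W] [FiniteDimensional K W]
  [AddCommGroup V'] [Module K V'] [AddCommGroup W'] [Module K W']

theorem finrank_range_rTensor_sup_range_lTensor_add (f : V' →ₗ[K] V) (g : W' →ₗ[K] W) :
    finrank K ↥(LinearMap.range (f.rTensor W) ⊔ LinearMap.range (g.lTensor V))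
      + finrank K (V ⧸ LinearMap.range f) * finrank K (W ⧸ LinearMap.range g)
      = finrank K V * finrank K W := by
  have hf : LinearMap.range (f.rTensor W)
      = LinearMap.range (TensorProduct.map (LinearMap.range f).subtype LinearMap.id) := by
    rw [LinearMap.rTensor, TensorProduct.range_map, TensorProduct.range_map,
      Submodule.range_subtype]
  have hg : LinearMap.range (g.lTensor V)
      = LinearMap.range (TensorProduct.map LinearMap.id (LinearMap.range g).subtype) := by
    rw [LinearMap.lTensor, TensorProduct.range_map, TensorProduct.range_map,
      Submodule.range_subtype]
  rw [hf, hg, ← finrank_tensorProduct,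
    (TensorProduct.quotientTensorQuotientEquiv (LinearMap.range f) (LinearMap.range g)).finrank_eq,
    add_comm, Submodule.finrank_quotient_add_finrank, finrank_tensorProduct]

end TensorQuotient

namespace Matrix

variable {K : Type*} [Field K]

theorem rank_fromCols {m n₁ n₂ : Type*} [Fintype n₁] [Fintype n₂]
    (M : Matrix m n₁ K) (N : Matrix m n₂ K) :
    (fromCols M N).rank
      = finrank K ↥(LinearMap.range M.mulVecLin ⊔ LinearMap.range N.mulVecLin) := by
  have h : (fromCols M N).mulVecLin = M.mulVecLin.coprod N.mulVecLin ∘ₗ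
      (LinearEquiv.sumArrowLequivProdArrow n₁ n₂ K K).toLinearMap :=
    LinearMap.ext fun v => fromCols_mulVec M N v
  rw [rank, h, LinearMap.range_comp_of_range_eq_top _ (LinearEquiv.range _),
    LinearMap.range_coprod]

theorem range_mulVecLin_neg {m n : Type*} [Fintype n] (M : Matrix m n K) :
    LinearMap.range (-M).mulVecLin = LinearMap.range M.mulVecLin := by
  have h : (-M).mulVecLin = -M.mulVecLin := LinearMap.ext fun v => neg_mulVec v M
  rw [h, LinearMap.range_neg]

variable {ι ι' κ κ' : Type*} [Fintype ι] [Fintype ι'] [Fintype κ] [Fintype κ']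

theorem mulVecLin_kronecker [DecidableEq ι] [DecidableEq κ] (A : Matrix ι' ι K)
    (B : Matrix κ' κ K) :
    (A ⊗ₖ B).mulVecLin
      = ((Pi.basisFun K ι').tensorProduct (Pi.basisFun K κ')).equivFun.toLinearMap
        ∘ₗ TensorProduct.map A.mulVecLin B.mulVecLin
        ∘ₗ ((Pi.basisFun K ι).tensorProduct (Pi.basisFun K κ)).equivFun.symm.toLinearMap := by
  have h := toLin_kronecker (Pi.basisFun K ι) (Pi.basisFun K κ) (Pi.basisFun K ι')
    (Pi.basisFun K κ') A B
  rw [toLin_eq_toLin', toLin_eq_toLin', toLin'_apply', toLin'_apply'] at h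
  rw [← h]
  refine LinearMap.ext fun v => ?_
  simp only [toLin, LinearMap.toMatrix, LinearEquiv.trans_symm, LinearEquiv.trans_apply,
    LinearEquiv.arrowCongr_symm_apply, LinearMap.coe_comp, LinearEquiv.coe_coe,
    Function.comp_apply, LinearEquiv.apply_symm_apply, LinearMap.toMatrix'_symm, toLin'_apply,
    mulVecLin_apply]

theorem rank_fromCols_kronecker_one_one_kronecker [DecidableEq ι] [DecidableEq ι']
    [DecidableEq κ] [DecidableEq κ'] (A : Matrix ι' ι K) (B : Matrix κ' κ K) :
    (fromCols (A ⊗ₖ (1 : Matrix κ' κ' K)) ((1 : Matrix ι' ι' K) ⊗ₖ B)).rank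
      + (Fintype.card ι' - A.rank) * (Fintype.card κ' - B.rank)
      = Fintype.card ι' * Fintype.card κ' := by
  have h := finrank_range_rTensor_sup_range_lTensor_add A.mulVecLin B.mulVecLin
  rw [Submodule.finrank_quotient, Submodule.finrank_quotient, finrank_fintype_fun_eq_card,
    finrank_fintype_fun_eq_card] at h
  rw [rank_fromCols, mulVecLin_kronecker, mulVecLin_kronecker, mulVecLin_one, mulVecLin_one,
    LinearMap.range_comp, LinearMap.range_comp_of_range_eq_top _ (LinearEquiv.range _),
    LinearMap.range_comp, LinearMap.range_comp_of_range_eq_top _ (LinearEquiv.range _),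
    ← Submodule.map_sup, LinearEquiv.finrank_map_eq]
  exact h

end Matrix

/-- Let `A, B : Matrix (Fin m) (Fin m) F` over a field `F`, with kernel dimensions
`k_A = m − rank A` and `k_B = m − rank B`. For the lifted-product parity-check matrices
`H_X = [A ⊗ I_m, −(I_m ⊗ B)]` and `H_Z = [I_m ⊗ Bᵀ, Aᵀ ⊗ I_m]` we have
`rank H_X = m² − k_A·k_B` and `rank H_Z = m² − k_A·k_B`
(stated as `rank H_X + k_A·k_B = m²` and `rank H_Z + k_A·k_B = m²`). -/
theorem rank_liftedProduct_parityChecks {F : Type*} [Field F] {m : ℕ}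
    (A B : Matrix (Fin m) (Fin m) F) :
    (Matrix.fromCols (A ⊗ₖ (1 : Matrix (Fin m) (Fin m) F))
          (-((1 : Matrix (Fin m) (Fin m) F) ⊗ₖ B))).rank
        + (m - A.rank) * (m - B.rank) = m ^ 2 ∧
    (Matrix.fromCols ((1 : Matrix (Fin m) (Fin m) F) ⊗ₖ Bᵀ)
          (Aᵀ ⊗ₖ (1 : Matrix (Fin m) (Fin m) F))).rank
        + (m - A.rank) * (m - B.rank) = m ^ 2 := by
  have hX := rank_fromCols_kronecker_one_one_kronecker A B
  have hZ := rank_fromCols_kronecker_one_one_kronecker Aᵀ Bᵀ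
  simp only [Fintype.card_fin, rank_transpose] at hX hZ
  constructor
  · rw [rank_fromCols, range_mulVecLin_neg, ← rank_fromCols, hX, sq]
  · rw [rank_fromCols, sup_comm, ← rank_fromCols, hZ, sq]
end

section
/- Let F be a field and A, B : Matrix (Fin m) (Fin m) F. Then the intersection of the ranges of the linear maps on F^{Fin m × Fin m} induced by A ⊗ I_m and by I_m ⊗ B has dimension rank(A)·rank(B): finrank(range((A ⊗ I_m).mulVecLin) ⊓ range((I_m ⊗ B).mulVecLin)) = rank(A)·rank(B). -/
open Matrix
open Kronecker

/-!
Since `A ⊗ B = (A ⊗ 1)(1 ⊗ B) = (1 ⊗ B)(A ⊗ 1)`, the range of `A ⊗ B` lies in both ranges.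
Conversely, pick generalized inverses `AGA = A`, `BHB = B`: then `AG ⊗ 1` and `1 ⊗ BH` fix the
ranges of `A ⊗ 1` and `1 ⊗ B` respectively, so a vector `x` in both satisfies
`x = (AG ⊗ BH) x = (A ⊗ B)(G ⊗ H) x`. Hence the intersection is the range of `A ⊗ B`, which is
`range A ⊗ range B` and has dimension `rank A * rank B`.
-/

namespace LinearMap

variable {K V W : Type*} [DivisionRing K] [AddCommGroup V] [Module K V] [AddCommGroup W]
  [Module K W]

theorem exists_comp_comp_eq_self (f : V →ₗ[K] W) : ∃ g : W →ₗ[K] V, f ∘ₗ g ∘ₗ f = f := by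
  obtain ⟨π, hπ⟩ := (range f).subtype.exists_leftInverse_of_injective (range f).ker_subtype
  obtain ⟨s, hs⟩ := f.rangeRestrict.exists_rightInverse_of_surjective f.range_rangeRestrict
  refine ⟨s ∘ₗ π, ?_⟩
  calc f ∘ₗ (s ∘ₗ π) ∘ₗ f
      = (range f).subtype ∘ₗ (f.rangeRestrict ∘ₗ s) ∘ₗ (π ∘ₗ (range f).subtype) ∘ₗ
          f.rangeRestrict := rfl
    _ = f := by rw [hs, hπ]; rfl

end LinearMap

namespace Matrix

variable {K : Type*} [Field K] {l m n p : Type*} [Fintype l] [Fintype m] [Fintype n] [Fintype p]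

theorem exists_mul_mul_eq_self [DecidableEq m] [DecidableEq n] (A : Matrix m n K) :
    ∃ G : Matrix n m K, A * G * A = A := by
  obtain ⟨g, hg⟩ := (toLin' A).exists_comp_comp_eq_self
  exact ⟨LinearMap.toMatrix' g, toLin'.injective <| by
    rw [toLin'_mul, toLin'_mul, toLin'_toMatrix', LinearMap.comp_assoc, hg]⟩

theorem mul_mulVec_eq_self_of_mem_range {A : Matrix m n K} {G : Matrix n m K}
    (hG : A * G * A = A) {x : m → K} (hx : x ∈ LinearMap.range A.mulVecLin) :
    (A * G) *ᵥ x = x := by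
  obtain ⟨u, rfl⟩ := hx
  simp only [mulVecLin_apply, mulVec_mulVec, hG]

theorem range_kronecker_one_inf_range_one_kronecker [DecidableEq l] [DecidableEq m]
    [DecidableEq n] [DecidableEq p] (A : Matrix l m K) (B : Matrix n p K) :
    LinearMap.range (A ⊗ₖ (1 : Matrix n n K)).mulVecLin ⊓
        LinearMap.range ((1 : Matrix l l K) ⊗ₖ B).mulVecLin =
      LinearMap.range (A ⊗ₖ B).mulVecLin := by
  have factor_left : A ⊗ₖ B = (A ⊗ₖ (1 : Matrix n n K)) * ((1 : Matrix m m K) ⊗ₖ B) := by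
    rw [← mul_kronecker_mul, Matrix.mul_one, Matrix.one_mul]
  have factor_right : A ⊗ₖ B = ((1 : Matrix l l K) ⊗ₖ B) * (A ⊗ₖ (1 : Matrix p p K)) := by
    rw [← mul_kronecker_mul, Matrix.mul_one, Matrix.one_mul]
  refine le_antisymm ?_ (le_inf ?_ ?_)
  · rintro x ⟨hxA, hxB⟩
    obtain ⟨G, hG⟩ := A.exists_mul_mul_eq_self
    obtain ⟨H, hH⟩ := B.exists_mul_mul_eq_self
    have hG' : (A ⊗ₖ (1 : Matrix n n K)) * (G ⊗ₖ (1 : Matrix n n K)) *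
        (A ⊗ₖ (1 : Matrix n n K)) = A ⊗ₖ (1 : Matrix n n K) := by
      simp only [← mul_kronecker_mul, hG, one_mul]
    have hH' : ((1 : Matrix l l K) ⊗ₖ B) * ((1 : Matrix l l K) ⊗ₖ H) *
        ((1 : Matrix l l K) ⊗ₖ B) = (1 : Matrix l l K) ⊗ₖ B := by
      simp only [← mul_kronecker_mul, hH, one_mul]
    refine ⟨(G ⊗ₖ H) *ᵥ x, ?_⟩
    calc (A ⊗ₖ B) *ᵥ ((G ⊗ₖ H) *ᵥ x)
        = ((A ⊗ₖ (1 : Matrix n n K)) * (G ⊗ₖ (1 : Matrix n n K))) *ᵥ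
            (((1 : Matrix l l K) ⊗ₖ B) * ((1 : Matrix l l K) ⊗ₖ H)) *ᵥ x := by
          simp only [mulVec_mulVec, ← mul_kronecker_mul, mul_one, one_mul]
      _ = x := by
          rw [mul_mulVec_eq_self_of_mem_range hH' hxB,
            mul_mulVec_eq_self_of_mem_range hG' hxA]
  · rw [factor_left, mulVecLin_mul]
    exact LinearMap.range_comp_le_range _ _
  · rw [factor_right, mulVecLin_mul]
    exact LinearMap.range_comp_le_range _ _

end Matrix

namespace TensorProduct

variable {K M N P Q : Type*} [Field K] [AddCommGroup M] [Module K M] [AddCommGroup N] [Module K N]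
  [AddCommGroup P] [Module K P] [AddCommGroup Q] [Module K Q]

-- `range f ⊗ range g → P ⊗ Q` is injective because vector spaces are flat.
theorem finrank_range_map (f : M →ₗ[K] P) (g : N →ₗ[K] Q) :
    Module.finrank K (LinearMap.range (map f g)) =
      Module.finrank K (LinearMap.range f) * Module.finrank K (LinearMap.range g) := by
  rw [range_map, ← range_mapIncl, LinearMap.finrank_range_of_inj
    (Module.Flat.tensorProduct_mapIncl_injective_of_right _ _), Module.finrank_tensorProduct]

end TensorProduct

theorem Matrix.rank_kronecker {K : Type*} [Field K] {l m n p : Type*} [Fintype l] [Fintype m]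
    [Fintype n] [Fintype p] [DecidableEq m] [DecidableEq p] (A : Matrix l m K) (B : Matrix n p K) :
    (A ⊗ₖ B).rank = A.rank * B.rank := by
  rw [rank_eq_finrank_range_toLin (A ⊗ₖ B) ((Pi.basisFun K l).tensorProduct (Pi.basisFun K n))
      ((Pi.basisFun K m).tensorProduct (Pi.basisFun K p)), toLin_kronecker,
    TensorProduct.finrank_range_map, ← rank_eq_finrank_range_toLin, ← rank_eq_finrank_range_toLin]

/-- For `A, B : Matrix (Fin m) (Fin m) F` over a field `F`, the intersection of the ranges
of the linear maps induced by `A ⊗ I_m` and `I_m ⊗ B` has dimension `rank A · rank B`. -/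
theorem finrank_range_kronecker_inf {F : Type*} [Field F] {m : ℕ}
    (A B : Matrix (Fin m) (Fin m) F) :
    Module.finrank F
        ↥(LinearMap.range (A ⊗ₖ (1 : Matrix (Fin m) (Fin m) F)).mulVecLin ⊓
          LinearMap.range ((1 : Matrix (Fin m) (Fin m) F) ⊗ₖ B).mulVecLin) =
      A.rank * B.rank := by
  rw [range_kronecker_one_inf_range_one_kronecker, ← rank_kronecker]
  rfl
end

section
/- Let G be a finite group, H a subgroup of G, and F a field. Let I be a left ideal of the group algebra F[H] (an F-subspace of F[H] closed under left multiplication by every element of F[H]), and let C be the left ideal of F[G] generated by the image of I under the algebra homomorphism F[H] → F[G] induced by the inclusion H ↪ G. Then the F-dimension of C equals the index of H in G times the F-dimension of I: finrank_F C = [G : H] · finrank_F I. -/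
/-!
Choosing coset representatives `q.out` writes `F[G]` as the direct sum `⊕_{q ∈ G/H} q.out · F[H]`,
compatibly with right multiplication by `F[H]`. Since `I` is a left ideal, this splits
`F[G] · Ω(I)` as `⊕_{q ∈ G/H} q.out · Ω(I)`, a direct sum of `[G : H]` copies of `I`.
-/

open MonoidAlgebra

noncomputable def Subgroup.quotientProdEquiv {G : Type*} [Group G] (H : Subgroup G) :
    (G ⧸ H) × H ≃ G where
  toFun p := p.1.out * p.2
  invFun g := (g, ⟨(g : G ⧸ H).out⁻¹ * g, QuotientGroup.eq.mp (QuotientGroup.out_eq' _)⟩)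
  left_inv p := by
    have hq : ((p.1.out * p.2 : G) : G ⧸ H) = p.1 := by
      rw [QuotientGroup.mk_mul_of_mem _ p.2.2, QuotientGroup.out_eq']
    ext
    · exact hq
    · simp [hq]
  right_inv g := by simp

theorem Module.finrank_finsupp_eq_natCard_mul {R M : Type*} [Semiring R] [StrongRankCondition R]
    [AddCommMonoid M] [Module R M] [Module.Free R M] (ι : Type*) :
    Module.finrank R (ι →₀ M) = Nat.card ι * Module.finrank R M := by
  rw [Module.finrank, Module.finrank, rank_finsupp, Cardinal.toNat_mul, Cardinal.toNat_lift,
    Cardinal.toNat_lift, Nat.card]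

namespace MonoidAlgebra

variable {k G : Type*} [CommSemiring k] [Group G] (H : Subgroup G)

noncomputable def cosetDecomposition : (G ⧸ H →₀ MonoidAlgebra k H) ≃ₗ[k] MonoidAlgebra k G :=
  (Finsupp.mapRange.linearEquiv (coeffLinearEquiv k)).trans <|
    (Finsupp.curryLinearEquiv k).symm.trans <|
      (Finsupp.domLCongr H.quotientProdEquiv).trans (coeffLinearEquiv k).symm

theorem cosetDecomposition_single (q : G ⧸ H) (x : MonoidAlgebra k H) :
    cosetDecomposition H (Finsupp.single q x) =
      single q.out 1 * mapDomainAlgHom k k H.subtype x := by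
  induction x using MonoidAlgebra.induction_linear with
  | zero => simp
  | add x y hx hy => simp only [Finsupp.single_add, map_add, mul_add, hx, hy]
  | single h r => simp [cosetDecomposition, Subgroup.quotientProdEquiv]

theorem cosetDecomposition_mul_mapDomainAlgHom (f : G ⧸ H →₀ MonoidAlgebra k H)
    (y : MonoidAlgebra k H) :
    cosetDecomposition H f * mapDomainAlgHom k k H.subtype y =
      cosetDecomposition H (Finsupp.mapRange.linearMap (LinearMap.mulRight k y) f) := by
  induction f using Finsupp.induction_linear with
  | zero => simp
  | add f g hf hg => simp only [map_add, add_mul, hf, hg]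
  | single q x =>
    rw [Finsupp.mapRange.linearMap_apply, Finsupp.mapRange_single, cosetDecomposition_single,
      cosetDecomposition_single, LinearMap.mulRight_apply, map_mul, mul_assoc]

variable (I : Submodule (MonoidAlgebra k H) (MonoidAlgebra k H))

noncomputable def inducedIdealMap : (G ⧸ H →₀ I.restrictScalars k) →ₗ[k] MonoidAlgebra k G :=
  (cosetDecomposition H).toLinearMap ∘ₗ Finsupp.mapRange.linearMap (I.restrictScalars k).subtype

theorem inducedIdealMap_injective : Function.Injective (inducedIdealMap H I) :=
  (cosetDecomposition H).injective.comp
    (Finsupp.mapRange_injective _ rfl (I.restrictScalars k).injective_subtype)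

theorem inducedIdealMap_single (q : G ⧸ H) (x : I.restrictScalars k) :
    inducedIdealMap H I (Finsupp.single q x) =
      single q.out 1 * mapDomainAlgHom k k H.subtype x := by
  simp [inducedIdealMap, cosetDecomposition_single]

theorem mul_mem_range_inducedIdealMap (a : MonoidAlgebra k G)
    (f : G ⧸ H →₀ I.restrictScalars k) :
    a * inducedIdealMap H I f ∈ LinearMap.range (inducedIdealMap H I) := by
  induction f using Finsupp.induction_linear with
  | zero => simp
  | add f g hf hg => simpa only [map_add, mul_add] using add_mem hf hg
  | single q x =>
    obtain ⟨b, hb⟩ := (cosetDecomposition H).surjective (a * single q.out 1)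
    -- `a * q.out * Ω x = Σ_{q'} q'.out * Ω (b q' * x)`, and `b q' * x ∈ I` as `I` is a left ideal.
    refine ⟨Finsupp.mapRange.linearMap
      ((LinearMap.toSpanSingleton (MonoidAlgebra k H) I x).restrictScalars k) b, ?_⟩
    rw [inducedIdealMap_single, ← mul_assoc, ← hb, cosetDecomposition_mul_mapDomainAlgHom]
    exact congrArg (cosetDecomposition H) (Finsupp.ext fun _ => rfl)

theorem span_image_mapDomainAlgHom_eq_range :
    (Submodule.span (MonoidAlgebra k G)
      (mapDomainAlgHom k k H.subtype '' (I : Set (MonoidAlgebra k H)))).restrictScalars k =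
    LinearMap.range (inducedIdealMap H I) := by
  apply le_antisymm
  · let R : Submodule (MonoidAlgebra k G) (MonoidAlgebra k G) :=
      { LinearMap.range (inducedIdealMap H I) with
        smul_mem' := by
          rintro a _ ⟨f, rfl⟩
          exact mul_mem_range_inducedIdealMap H I a f }
    have hsub : mapDomainAlgHom k k H.subtype '' (I : Set (MonoidAlgebra k H)) ⊆ R := by
      rintro _ ⟨x, hx, rfl⟩
      let q : G ⧸ H := QuotientGroup.mk 1
      have hx' := R.smul_mem (single q.out⁻¹ 1) ⟨Finsupp.single q ⟨x, hx⟩, rfl⟩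
      rwa [inducedIdealMap_single, smul_eq_mul, ← mul_assoc, single_mul_single, one_mul,
        inv_mul_cancel, ← one_def, one_mul] at hx'
    exact fun a ha => Submodule.span_le.mpr hsub ha
  · rintro _ ⟨f, rfl⟩
    induction f using Finsupp.induction_linear with
    | zero => simp
    | add f g hf hg => simpa only [map_add] using add_mem hf hg
    | single q x =>
      rw [inducedIdealMap_single]
      exact Submodule.smul_mem _ _ (Submodule.subset_span (Set.mem_image_of_mem _ x.2))

end MonoidAlgebra

theorem finrank_induced_code_general {F : Type*} [Field F] {G : Type*} [Group G]
    (H : Subgroup G) (I : Submodule (MonoidAlgebra F H) (MonoidAlgebra F H)) :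
    Module.finrank F
        ↥((Submodule.span (MonoidAlgebra F G)
            ((MonoidAlgebra.mapDomainAlgHom F F H.subtype) ''
              (I : Set (MonoidAlgebra F H)))).restrictScalars F) =
      H.index * Module.finrank F ↥(I.restrictScalars F) := by
  rw [span_image_mapDomainAlgHom_eq_range,
    LinearMap.finrank_range_of_inj (inducedIdealMap_injective H I),
    Module.finrank_finsupp_eq_natCard_mul, Subgroup.index]

/-- Let `G` be a finite group, `H ≤ G` a subgroup, and `F` a field. Let `I` be a left
ideal of the group algebra `F[H]`, and let `C` be the left ideal of `F[G]` generated by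
the image of `I` under the algebra homomorphism `Ω : F[H] → F[G]` induced by the inclusion
`H ↪ G`. Then `finrank_F C = [G : H] · finrank_F I`. -/
theorem finrank_induced_code {F : Type*} [Field F] {G : Type*} [Group G] [Fintype G]
    (H : Subgroup G) (I : Submodule (MonoidAlgebra F H) (MonoidAlgebra F H)) :
    Module.finrank F
        ↥((Submodule.span (MonoidAlgebra F G)
            ((MonoidAlgebra.mapDomainAlgHom F F H.subtype) ''
              (I : Set (MonoidAlgebra F H)))).restrictScalars F) =
      H.index * Module.finrank F ↥(I.restrictScalars F) :=
  finrank_induced_code_general H I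
end

section
/- Let G be a finite group, H a subgroup of G, and F a field. Let I be a nonzero left ideal of the group algebra F[H], and let C be the left ideal of F[G] generated by the image of I under the algebra homomorphism F[H] → F[G] induced by the inclusion H ↪ G. Then C is nonzero and the minimum Hamming weight of a nonzero element of C equals the minimum Hamming weight of a nonzero element of I: min{|supp(x)| : x ∈ C, x ≠ 0} = min{|supp(c)| : c ∈ I, c ≠ 0}. -/
/-!
Restricting `x : F[G]` to a left coset `gH` and translating back to `H` gives its coset slice in
`F[H]`. For a generator `Ω c` of the induced code each slice is a left translate of `c` or zero,
and left multiplication by `F[G]` only permutes the cosets while acting on each slice through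
`F[H]`; so every slice of every element of the code lies in `I`. A nonzero `x` has a nonzero
slice, at a coset meeting its support, whose weight is at most that of `x`; conversely `Ω`
preserves weights.
-/

open MonoidAlgebra

theorem Nat.sInf_le_sInf_of_forall_exists_le {S T : Set ℕ} (hS : S.Nonempty)
    (h : ∀ n ∈ S, ∃ m ∈ T, m ≤ n) : sInf T ≤ sInf S := by
  obtain ⟨m, hm, hle⟩ := h _ (Nat.sInf_mem hS)
  exact (Nat.sInf_le hm).trans hle

theorem Nat.sInf_eq_of_forall_exists_le {S T : Set ℕ} (hST : ∀ n ∈ S, ∃ m ∈ T, m ≤ n)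
    (hTS : ∀ m ∈ T, ∃ n ∈ S, n ≤ m) : sInf S = sInf T := by
  rcases S.eq_empty_or_nonempty with rfl | hS
  · have hT : T = ∅ := Set.eq_empty_of_forall_notMem fun m hm => by simpa using hTS m hm
    rw [hT]
  · obtain ⟨m, hm, -⟩ := hST _ hS.some_mem
    exact le_antisymm (Nat.sInf_le_sInf_of_forall_exists_le ⟨m, hm⟩ hTS)
      (Nat.sInf_le_sInf_of_forall_exists_le hS hST)

namespace MonoidAlgebra

theorem card_support_mapDomain_of_injective {R M N : Type*} [Semiring R] {f : M → N}
    (hf : Function.Injective f) (x : R[M]) :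
    (mapDomain f x).coeff.support.card = x.coeff.support.card := by
  classical
  rw [coeff_mapDomain, Finsupp.mapDomain_support_of_injective hf,
    Finset.card_image_of_injective _ hf]

variable {R G : Type*} [Semiring R] [Group G] (H : Subgroup G)

noncomputable def cosetSlice (g : G) : R[G] →+ R[H] :=
  comapDomainAddMonoidHom (fun h : H => g * h) fun _ _ h => Subtype.ext (mul_left_cancel h)

variable {H}

theorem coeff_cosetSlice (g : G) (x : R[G]) (h : H) :
    (cosetSlice H g x).coeff h = x.coeff (g * h) := rfl

theorem cosetSlice_ne_zero {g : G} {x : R[G]} (hg : x.coeff g ≠ 0) : cosetSlice H g x ≠ 0 := by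
  intro h0
  simpa [coeff_cosetSlice, hg] using congr(($h0).coeff 1)

theorem card_support_cosetSlice_le (g : G) (x : R[G]) :
    (cosetSlice H g x).coeff.support.card ≤ x.coeff.support.card :=
  Finset.card_le_card_of_injOn (fun h : H => g * h)
    (fun _ hh => by simpa [coeff_cosetSlice] using hh)
    fun _ _ _ _ hab => Subtype.ext (mul_left_cancel hab)

theorem cosetSlice_single_mul (g a : G) (r : R) (x : R[G]) :
    cosetSlice H g (single a r * x) = single 1 r * cosetSlice H (a⁻¹ * g) x := by
  ext h
  simp only [coeff_cosetSlice, coeff_single_mul_apply, inv_one, one_mul, mul_assoc]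

theorem cosetSlice_mapDomain_subtype_of_mem {g : G} (hg : g ∈ H) (c : R[H]) :
    cosetSlice H g (mapDomain H.subtype c) = single (⟨g, hg⟩⁻¹ : H) 1 * c := by
  ext h
  rw [coeff_cosetSlice, coeff_single_mul_apply, inv_inv, one_mul, coeff_mapDomain]
  exact Finsupp.mapDomain_apply Subtype.val_injective c.coeff (⟨g, hg⟩ * h)

theorem cosetSlice_mapDomain_subtype_of_notMem {g : G} (hg : g ∉ H) (c : R[H]) :
    cosetSlice H g (mapDomain H.subtype c) = 0 := by
  ext h
  rw [coeff_cosetSlice, coeff_mapDomain, Finsupp.mapDomain_of_notMem_range]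
  · rfl
  rintro ⟨k, hk : (k : G) = g * h⟩
  exact hg (by simpa [hk] using mul_mem k.2 (inv_mem h.2))

variable (H) in
def cosetSliceIdeal (I : Submodule R[H] R[H]) : Submodule R[G] R[G] where
  carrier := {x | ∀ g, cosetSlice H g x ∈ I}
  add_mem' hx hy g := by rw [map_add]; exact I.add_mem (hx g) (hy g)
  zero_mem' g := by rw [map_zero]; exact I.zero_mem
  smul_mem' r x hx := by
    induction r using MonoidAlgebra.induction_linear with
    | zero => intro g; rw [zero_smul, map_zero]; exact I.zero_mem
    | add r s hr hs => intro g; rw [add_smul, map_add]; exact I.add_mem (hr g) (hs g)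
    | single a r => intro g; rw [smul_eq_mul, cosetSlice_single_mul]; exact I.smul_mem _ (hx _)

theorem span_image_mapDomainAlgHom_le_cosetSliceIdeal {F : Type*} [CommSemiring F]
    (I : Submodule F[H] F[H]) :
    Submodule.span F[G] (mapDomainAlgHom F F H.subtype '' I) ≤ cosetSliceIdeal H I := by
  rw [Submodule.span_le]
  rintro _ ⟨c, hc, rfl⟩ g
  rw [mapDomainAlgHom_apply]
  by_cases hg : g ∈ H
  · rw [cosetSlice_mapDomain_subtype_of_mem hg]
    exact I.smul_mem _ hc
  · rw [cosetSlice_mapDomain_subtype_of_notMem hg]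
    exact I.zero_mem

end MonoidAlgebra

theorem minWeight_induced_code_general {F : Type*} [Field F] {G : Type*} [Group G]
    (H : Subgroup G) (I : Submodule (MonoidAlgebra F H) (MonoidAlgebra F H))
    (hI : I ≠ ⊥) :
    Submodule.span (MonoidAlgebra F G)
        ((MonoidAlgebra.mapDomainAlgHom F F H.subtype) ''
          (I : Set (MonoidAlgebra F H))) ≠ ⊥ ∧
    sInf {n : ℕ | ∃ x ∈ Submodule.span (MonoidAlgebra F G)
          ((MonoidAlgebra.mapDomainAlgHom F F H.subtype) ''
            (I : Set (MonoidAlgebra F H))), x ≠ 0 ∧ x.coeff.support.card = n} =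
      sInf {n : ℕ | ∃ c ∈ I, c ≠ 0 ∧ c.coeff.support.card = n} := by
  set Ω := mapDomainAlgHom F F H.subtype
  have hΩ_mem : ∀ c ∈ I, Ω c ∈ Submodule.span F[G] (Ω '' I) :=
    fun c hc => Submodule.subset_span ⟨c, hc, rfl⟩
  have hΩ_ne_zero : ∀ c : F[H], c ≠ 0 → Ω c ≠ 0 := fun c hc =>
    (map_ne_zero_iff Ω (mapDomain_injective Subtype.val_injective)).mpr hc
  have hΩ_card (c : F[H]) : (Ω c).coeff.support.card = c.coeff.support.card :=
    card_support_mapDomain_of_injective Subtype.val_injective c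
  obtain ⟨c₀, hc₀, hc₀_ne⟩ := (Submodule.ne_bot_iff I).mp hI
  refine ⟨(Submodule.ne_bot_iff _).mpr ⟨_, hΩ_mem c₀ hc₀, hΩ_ne_zero c₀ hc₀_ne⟩,
    Nat.sInf_eq_of_forall_exists_le ?_ ?_⟩
  · rintro _ ⟨x, hx, hx_ne, rfl⟩
    obtain ⟨g, hg⟩ := Finsupp.support_nonempty_iff.mpr (coeff_eq_zero.not.mpr hx_ne)
    exact ⟨_, ⟨cosetSlice H g x, span_image_mapDomainAlgHom_le_cosetSliceIdeal I hx g,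
      cosetSlice_ne_zero (Finsupp.mem_support_iff.mp hg), rfl⟩, card_support_cosetSlice_le g x⟩
  · rintro _ ⟨c, hc, hc_ne, rfl⟩
    exact ⟨_, ⟨Ω c, hΩ_mem c hc, hΩ_ne_zero c hc_ne, rfl⟩, (hΩ_card c).le⟩

/-- Let `G` be a finite group, `H ≤ G` a subgroup, and `F` a field. Let `I` be a nonzero
left ideal of `F[H]` and `C` the left ideal of `F[G]` generated by the image of `I` under
the algebra homomorphism `Ω : F[H] → F[G]` induced by the inclusion. Then `C` is nonzero
and the minimum Hamming weight of a nonzero element of `C` equals the minimum Hamming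
weight of a nonzero element of `I`. -/
theorem minWeight_induced_code {F : Type*} [Field F] {G : Type*} [Group G] [Fintype G]
    (H : Subgroup G) (I : Submodule (MonoidAlgebra F H) (MonoidAlgebra F H))
    (hI : I ≠ ⊥) :
    Submodule.span (MonoidAlgebra F G)
        ((MonoidAlgebra.mapDomainAlgHom F F H.subtype) ''
          (I : Set (MonoidAlgebra F H))) ≠ ⊥ ∧
    sInf {n : ℕ | ∃ x ∈ Submodule.span (MonoidAlgebra F G)
          ((MonoidAlgebra.mapDomainAlgHom F F H.subtype) ''
            (I : Set (MonoidAlgebra F H))), x ≠ 0 ∧ x.coeff.support.card = n} =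
      sInf {n : ℕ | ∃ c ∈ I, c ≠ 0 ∧ c.coeff.support.card = n} :=
  minWeight_induced_code_general H I hI
end

section
/- Let G be a finite abelian group, F a field, A ∈ Mat_{m_A × m_A}(F[G]) and B ∈ Mat_{m_B × m_B}(F[G]). Suppose the flattened matrix A♭ : Matrix (Fin m_A × G) (Fin m_A × G) F with entries A♭((i,g),(j,h)) = (A i j)(h·g⁻¹) has trivial kernel (A♭ · c = 0 implies c = 0), and likewise the flattened matrix B♭ with entries B♭((k,g),(l,h)) = (B k l)(h⁻¹·g) has trivial kernel. Then the lifted product code LP(A,B) has dimension zero; that is, the flattened lifted-product parity-check matrices H_X, H_Z (which here both have 2·m_A·m_B·|G| columns) satisfy rank(H_X) + rank(H_Z) = 2·m_A·m_B·|G|. -/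
open Matrix

/-!
Both parity-check matrices have full row rank. On the columns `(Sum.inl (·, k), ·)` the row
combination `x ᵥ* H_X` is `x ((·, k), ·) ᵥ* A♭`, so every slice of a left-kernel vector of `H_X`
lies in the left kernel of the square matrix `A♭`, which is trivial because its right kernel is.
On the columns `(Sum.inl (j, ·), ·)` the combination `x ᵥ* H_Z` is `B♭ *ᵥ x ((j, ·), ·)`, and the
hypothesis on `B♭` applies directly.
-/

namespace LiftedProduct

variable {F : Type*} [Field F] {G : Type*} [Group G] [Fintype G] {mA nA mB nB : ℕ}

/-- The flattening `A♭` of the statement. -/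
def flattenRow (A : Matrix (Fin mA) (Fin nA) (MonoidAlgebra F G)) :
    Matrix (Fin mA × G) (Fin nA × G) F :=
  Matrix.of fun p q => (A p.1 q.1).coeff (q.2 * p.2⁻¹)

/-- The flattening `B♭` of the statement. -/
def flattenCol (B : Matrix (Fin mB) (Fin nB) (MonoidAlgebra F G)) :
    Matrix (Fin mB × G) (Fin nB × G) F :=
  Matrix.of fun p q => (B p.1 q.1).coeff (q.2⁻¹ * p.2)

variable (A : Matrix (Fin mA) (Fin nA) (MonoidAlgebra F G))
  (B : Matrix (Fin mB) (Fin nB) (MonoidAlgebra F G))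

theorem vecMul_liftedHX_inl (x : (Fin mA × Fin mB) × G → F) (j : Fin nA) (k : Fin mB) (h : G) :
    (x ᵥ* liftedHX A B) (Sum.inl (j, k), h) =
      ((fun p : Fin mA × G => x ((p.1, k), p.2)) ᵥ* flattenRow A) (j, h) := by
  simp only [vecMul, dotProduct, liftedHX, flattenRow, of_apply, Fintype.sum_prod_type,
    mul_ite, mul_zero, Finset.sum_ite_irrel, Finset.sum_const_zero, Finset.sum_ite_eq',
    Finset.mem_univ, if_true]

theorem vecMul_liftedHZ_inl (x : (Fin nA × Fin nB) × G → F) (j : Fin nA) (k : Fin mB) (h : G) :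
    (x ᵥ* liftedHZ A B) (Sum.inl (j, k), h) =
      (flattenCol B *ᵥ fun p : Fin nB × G => x ((j, p.1), p.2)) (k, h) := by
  simp only [vecMul, mulVec, dotProduct, liftedHZ, flattenCol, of_apply, Fintype.sum_prod_type,
    mul_ite, mul_zero, Finset.sum_ite_irrel, Finset.sum_const_zero, Finset.sum_ite_eq',
    Finset.mem_univ, if_true, mul_comm]

variable {A B}

theorem vecMul_liftedHX_injective (hA : Function.Injective (flattenRow A).vecMul) :
    Function.Injective (liftedHX A B).vecMul := by
  intro x y hxy
  funext ⟨⟨i, k⟩, g⟩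
  have hslice : (fun p : Fin mA × G => x ((p.1, k), p.2)) = fun p => y ((p.1, k), p.2) :=
    hA <| funext fun ⟨j, h⟩ => by
      simpa only [vecMul_liftedHX_inl] using congrFun hxy (Sum.inl (j, k), h)
  exact congrFun hslice (i, g)

theorem vecMul_liftedHZ_injective (hB : Function.Injective (flattenCol B).mulVec) :
    Function.Injective (liftedHZ A B).vecMul := by
  intro x y hxy
  funext ⟨⟨j, l⟩, g⟩
  have hslice : (fun p : Fin nB × G => x ((j, p.1), p.2)) = fun p => y ((j, p.1), p.2) :=
    hB <| funext fun ⟨k, h⟩ => by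
      simpa only [vecMul_liftedHZ_inl] using congrFun hxy (Sum.inl (j, k), h)
  exact congrFun hslice (l, g)

theorem rank_liftedHX (hA : Function.Injective (flattenRow A).vecMul) :
    (liftedHX A B).rank = mA * mB * Fintype.card G := by
  rw [(vecMul_injective_iff.mp (vecMul_liftedHX_injective hA)).rank_matrix]
  simp [Fintype.card_prod]

theorem rank_liftedHZ (hB : Function.Injective (flattenCol B).mulVec) :
    (liftedHZ A B).rank = nA * nB * Fintype.card G := by
  rw [(vecMul_injective_iff.mp (vecMul_liftedHZ_injective hB)).rank_matrix]
  simp [Fintype.card_prod]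

end LiftedProduct

/-- Let `G` be a finite abelian group and `A`, `B` square matrices over `F[G]` whose
flattened classical parity-check matrices `A♭`, `B♭` have trivial kernel. Then the lifted
product code `LP(A,B)` has dimension zero: `rank H_X + rank H_Z = 2·m_A·m_B·|G|`. -/
theorem liftedProduct_dim_zero_of_trivial_kernels {F : Type*} [Field F]
    {G : Type*} [CommGroup G] [Fintype G] {mA mB : ℕ}
    (A : Matrix (Fin mA) (Fin mA) (MonoidAlgebra F G))
    (B : Matrix (Fin mB) (Fin mB) (MonoidAlgebra F G))
    (hA : ∀ c : Fin mA × G → F,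
      (Matrix.of fun p q : Fin mA × G => (A p.1 q.1).coeff (q.2 * p.2⁻¹)).mulVec c = 0 → c = 0)
    (hB : ∀ c : Fin mB × G → F,
      (Matrix.of fun p q : Fin mB × G => (B p.1 q.1).coeff (q.2⁻¹ * p.2)).mulVec c = 0 → c = 0) :
    (liftedHX A B).rank + (liftedHZ A B).rank = 2 * mA * mB * Fintype.card G := by
  classical
  have hA_mulVec : Function.Injective (LiftedProduct.flattenRow A).mulVec :=
    (injective_iff_map_eq_zero (LiftedProduct.flattenRow A).mulVecLin).mpr hA
  have hB_mulVec : Function.Injective (LiftedProduct.flattenCol B).mulVec :=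
    (injective_iff_map_eq_zero (LiftedProduct.flattenCol B).mulVecLin).mpr hB
  have hA_vecMul : Function.Injective (LiftedProduct.flattenRow A).vecMul :=
    vecMul_injective_iff_isUnit.mpr (mulVec_injective_iff_isUnit.mp hA_mulVec)
  rw [LiftedProduct.rank_liftedHX hA_vecMul, LiftedProduct.rank_liftedHZ hB_mulVec]
  ring
end
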